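/- arXiv:2009.14498 — 2 statements merged into one kernel-verified Lean document; each statement's English description precedes it below -/
import Mathlib

section
/- Let A ∈ ℝ^{n×n} be stable, B ∈ ℝ^{n×m}, C ∈ ℝ^{p×n}, and let S ⊆ ℝ^{r×r} be a nonempty compact set every element of which is stable. Then there exist constants c₁ > 0 and c₂ > 0 such that for all A_r ∈ S, B_r ∈ ℝ^{r×m}, C_r ∈ ℝ^{p×r}, and ξ ∈ ℝ^{r×r}, the following holds: if X, Y ∈ ℝ^{n×r} and P, Q ∈ ℝ^{r×r} satisfy A X + X A_rᵀ + B B_rᵀ = 0, Aᵀ Y + Y A_r − Cᵀ C_r = 0, A_r P + P A_rᵀ + B_r B_rᵀ = 0, A_rᵀ Q + Q A_r + C_rᵀ C_r = 0, and if X', Y' ∈ ℝ^{n×r} and P', Q' ∈ ℝ^{r×r} satisfy A X' + X' A_rᵀ + X ξᵀ = 0, Aᵀ Y' + Y' A_r + Y ξ = 0, A_r P' + P' A_rᵀ + ξ P + P ξᵀ = 0, A_rᵀ Q' + Q' A_r + ξᵀ Q + Q ξ = 0, then ‖Q' P + Q P' + Y'ᵀ X + Yᵀ X'‖_F ≤ (c₁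 + c₂ ‖B_r‖_F ‖C_r‖_F) ‖B_r‖_F ‖C_r‖_F ‖ξ‖_F. -/
open Matrix

/-- A square real matrix is stable if every eigenvalue (as a complex matrix)
has negative real part. -/
def IsStable {r : ℕ} (A : Matrix (Fin r) (Fin r) ℝ) : Prop :=
  ∀ μ ∈ spectrum ℂ (A.map Complex.ofReal), μ.re < 0

/-- The Frobenius norm of a real matrix. -/
noncomputable def frobNorm {m n : ℕ} (M : Matrix (Fin m) (Fin n) ℝ) : ℝ :=
  Real.sqrt (Matrix.trace (Mᵀ * M))

/-! The Sylvester operator `U ↦ F U + U G` is injective when `F` and `G` are stable: from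
`F U = U (-G)` one gets `χ_F(F) U = U χ_F(-G)`, where `χ_F(F) = 0` by Cayley–Hamilton while
`χ_F(-G)` is invertible because `σ(F)` and `σ(-G)` lie in opposite half-planes. Inverting depends
continuously on the operator, so over the compact set `S` the inverses of the four Sylvester
operators `X ↦ A X + X A_rᵀ`, `Y ↦ Aᵀ Y + Y A_r`, `P ↦ A_r P + P A_rᵀ`, `Q ↦ A_rᵀ Q + Q A_r` are
bounded by a common `K` in Frobenius norm. Hence `‖X‖ ≤ K ‖B‖ ‖B_r‖`, `‖P‖ ≤ K ‖B_r‖²`, …, and the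
derivatives satisfy `‖X'‖ ≤ K ‖X‖ ‖ξ‖`, `‖P'‖ ≤ 2 K ‖P‖ ‖ξ‖`, …; submultiplicativity of the
Frobenius norm then gives the bound, with constants of order `K³`. -/

theorem Matrix.spectrum_transpose {K m : Type*} [Field K] [Fintype m] [DecidableEq m]
    (M : Matrix m m K) : spectrum K Mᵀ = spectrum K M := by
  ext μ
  rw [spectrum.mem_iff, spectrum.mem_iff, ← isUnit_transpose (algebraMap K _ μ - M),
    transpose_sub, algebraMap_eq_diagonal, diagonal_transpose]

open Polynomial in
theorem Matrix.eq_zero_of_mul_eq_mul_of_disjoint_spectrum {K m n : Type*} [Field K] [IsAlgClosed K]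
    [Fintype m] [DecidableEq m] [Fintype n] [DecidableEq n]
    {A : Matrix m m K} {D : Matrix n n K} {X : Matrix m n K} (hX : A * X = X * D)
    (hAD : Disjoint (spectrum K A) (spectrum K D)) : X = 0 := by
  have hpow (k : ℕ) : A ^ k * X = X * D ^ k := by
    induction k with
    | zero => simp
    | succ k ih => rw [pow_succ, pow_succ, Matrix.mul_assoc, hX, ← Matrix.mul_assoc, ih,
        Matrix.mul_assoc]
  have haeval (p : K[X]) : aeval A p * X = X * aeval D p := by
    simp only [aeval_eq_sum_range, Matrix.sum_mul, Matrix.mul_sum, smul_mul, Matrix.mul_smul, hpow]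
  have hunit : IsUnit (aeval D A.charpoly) := by
    rw [(IsAlgClosed.splits _).eq_prod_roots_of_monic A.charpoly_monic]
    by_contra h
    obtain ⟨k, hkD, hkA⟩ := spectrum.exists_mem_of_not_isUnit_aeval_prod h
    exact hAD.notMem_of_mem_right hkD (mem_spectrum_iff_isRoot_charpoly.2 hkA)
  obtain ⟨u, hu⟩ := hunit
  calc X = X * aeval D A.charpoly * (↑u⁻¹ : Matrix n n K) := by
        rw [← hu, Matrix.mul_assoc, Units.mul_inv, Matrix.mul_one]
    _ = 0 := by rw [← haeval, aeval_self_charpoly, Matrix.zero_mul, Matrix.zero_mul]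

theorem IsStable.transpose {r : ℕ} {M : Matrix (Fin r) (Fin r) ℝ} (h : IsStable M) :
    IsStable Mᵀ := by
  intro μ hμ
  rw [transpose_map, spectrum_transpose] at hμ
  exact h μ hμ

theorem IsStable.eq_zero_of_mul_add_mul_eq_zero {a b : ℕ} {F : Matrix (Fin a) (Fin a) ℝ}
    {G : Matrix (Fin b) (Fin b) ℝ} (hF : IsStable F) (hG : IsStable G)
    {U : Matrix (Fin a) (Fin b) ℝ} (h : F * U + U * G = 0) : U = 0 := by
  have hU : F.map Complex.ofRealHom * U.map Complex.ofRealHom =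
      U.map Complex.ofRealHom * (-G).map Complex.ofRealHom := by
    rw [← Matrix.map_mul, ← Matrix.map_mul, Matrix.mul_neg, eq_neg_of_add_eq_zero_left h]
  have hdisj : Disjoint (spectrum ℂ (F.map Complex.ofRealHom))
      (spectrum ℂ ((-G).map Complex.ofRealHom)) := by
    refine Set.disjoint_left.2 fun μ hμF hμG => ?_
    rw [Matrix.map_neg _ (map_neg _), ← spectrum.neg_eq, Set.mem_neg] at hμG
    have := hG _ hμG
    have := hF μ hμF
    simp only [Complex.neg_re] at *
    linarith
  apply Matrix.map_injective Complex.ofReal_injective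
  exact (eq_zero_of_mul_eq_mul_of_disjoint_spectrum hU hdisj).trans
    (Matrix.map_zero _ Complex.ofReal_zero).symm

theorem IsCompact.exists_norm_le_mul_norm_apply {𝕜 E T : Type*} [NontriviallyNormedField 𝕜]
    [CompleteSpace 𝕜] [NormedAddCommGroup E] [NormedSpace 𝕜 E] [FiniteDimensional 𝕜 E]
    [TopologicalSpace T] {S : Set T} (hS : IsCompact S) {f : T → E →L[𝕜] E}
    (hf : ContinuousOn f S) (hinj : ∀ t ∈ S, Function.Injective (f t)) :
    ∃ K ≥ 0, ∀ t ∈ S, ∀ x, ‖x‖ ≤ K * ‖f t x‖ := by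
  have := FiniteDimensional.complete 𝕜 E
  have hunit (t) (ht : t ∈ S) : IsUnit (f t) :=
    ContinuousLinearMap.isUnit_iff_isUnit_toLinearMap.2 <|
      (LinearMap.isUnit_iff_ker_eq_bot _).2 (LinearMap.ker_eq_bot.2 (hinj t ht))
  have hinv : ContinuousOn (fun t => Ring.inverse (f t)) S := fun t ht => by
    obtain ⟨u, hu⟩ := hunit t ht
    exact (hu ▸ NormedRing.inverse_continuousAt u).comp_continuousWithinAt (hf t ht)
  obtain ⟨C, hC⟩ := hS.exists_bound_of_continuousOn hinv
  refine ⟨max C 0, le_max_right _ _, fun t ht x => ?_⟩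
  calc ‖x‖ = ‖(Ring.inverse (f t) * f t) x‖ := by rw [Ring.inverse_mul_cancel _ (hunit t ht)]; rfl
    _ ≤ ‖Ring.inverse (f t)‖ * ‖f t x‖ := (Ring.inverse (f t)).le_opNorm _
    _ ≤ max C 0 * ‖f t x‖ := by gcongr; exact (hC t ht).trans (le_max_left _ _)

open scoped Matrix.Norms.Frobenius

theorem frobNorm_eq_norm {m n : ℕ} (M : Matrix (Fin m) (Fin n) ℝ) : frobNorm M = ‖M‖ := by
  rw [frobNorm, frobenius_norm_def, ← Real.sqrt_eq_rpow, trace, Finset.sum_comm]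
  simp [mul_apply, sq]

theorem Matrix.frobenius_norm_mul_transpose_le {l m n : Type*} [Fintype l] [Fintype m] [Fintype n]
    (M : Matrix l m ℝ) (N : Matrix n m ℝ) : ‖M * Nᵀ‖ ≤ ‖M‖ * ‖N‖ :=
  (frobenius_norm_mul M Nᵀ).trans_eq (by rw [frobenius_norm_transpose])

theorem Matrix.frobenius_norm_transpose_mul_le {l m n : Type*} [Fintype l] [Fintype m] [Fintype n]
    (M : Matrix m l ℝ) (N : Matrix m n ℝ) : ‖Mᵀ * N‖ ≤ ‖M‖ * ‖N‖ :=
  (frobenius_norm_mul Mᵀ N).trans_eq (by rw [frobenius_norm_transpose])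

def SylvesterBounded {a b : ℕ} (K : ℝ) (F : Matrix (Fin a) (Fin a) ℝ)
    (G : Matrix (Fin b) (Fin b) ℝ) : Prop :=
  ∀ U V : Matrix (Fin a) (Fin b) ℝ, F * U + U * G + V = 0 → ‖U‖ ≤ K * ‖V‖

theorem SylvesterBounded.mono {a b : ℕ} {K K' : ℝ} {F : Matrix (Fin a) (Fin a) ℝ}
    {G : Matrix (Fin b) (Fin b) ℝ} (h : SylvesterBounded K F G) (hK : K ≤ K') :
    SylvesterBounded K' F G := fun U V hUV =>
  (h U V hUV).trans (by gcongr)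

theorem SylvesterBounded.norm_le {a b : ℕ} {K c : ℝ} {F : Matrix (Fin a) (Fin a) ℝ}
    {G : Matrix (Fin b) (Fin b) ℝ} {U V : Matrix (Fin a) (Fin b) ℝ} (h : SylvesterBounded K F G)
    (hK : 0 ≤ K) (hUV : F * U + U * G + V = 0) (hV : ‖V‖ ≤ c) : ‖U‖ ≤ K * c :=
  (h U V hUV).trans (by gcongr)

theorem IsCompact.exists_sylvesterBounded {a b : ℕ} {T : Type*} [TopologicalSpace T] {S : Set T}
    (hS : IsCompact S) {F : T → Matrix (Fin a) (Fin a) ℝ} {G : T → Matrix (Fin b) (Fin b) ℝ}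
    (hF : Continuous F) (hG : Continuous G) (hstable : ∀ t ∈ S, IsStable (F t) ∧ IsStable (G t)) :
    ∃ K ≥ 0, ∀ t ∈ S, SylvesterBounded K (F t) (G t) := by
  let f : T → Matrix (Fin a) (Fin b) ℝ →L[ℝ] Matrix (Fin a) (Fin b) ℝ := fun t =>
    LinearMap.toContinuousLinearMap (mulLeftLinearMap _ ℝ (F t) + mulRightLinearMap _ ℝ (G t))
  have hcont : Continuous f := continuous_clm_apply.2 fun U =>
    (hF.matrix_mul continuous_const).add (continuous_const.matrix_mul hG)
  have hinj (t) (ht : t ∈ S) : Function.Injective (f t) :=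
    (injective_iff_map_eq_zero _).2 fun U hU =>
      (hstable t ht).1.eq_zero_of_mul_add_mul_eq_zero (hstable t ht).2 hU
  obtain ⟨K, hK, hbound⟩ := hS.exists_norm_le_mul_norm_apply hcont.continuousOn hinj
  refine ⟨K, hK, fun t ht U V hUV => ?_⟩
  have hU : ‖U‖ ≤ K * ‖F t * U + U * G t‖ := hbound t ht U
  rwa [eq_neg_of_add_eq_zero_left hUV, norm_neg] at hU

theorem IsCompact.exists_sylvesterBounded_lyapunov {n r : ℕ} {A : Matrix (Fin n) (Fin n) ℝ}
    {S : Set (Matrix (Fin r) (Fin r) ℝ)} (hS : IsCompact S) (hA : IsStable A)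
    (hSstable : ∀ M ∈ S, IsStable M) :
    ∃ K ≥ 0, ∀ M ∈ S, SylvesterBounded K A Mᵀ ∧ SylvesterBounded K Aᵀ M ∧
      SylvesterBounded K M Mᵀ ∧ SylvesterBounded K Mᵀ M := by
  have hT : Continuous fun M : Matrix (Fin r) (Fin r) ℝ => Mᵀ := continuous_id.matrix_transpose
  obtain ⟨K₁, hK₁, h₁⟩ := hS.exists_sylvesterBounded continuous_const hT
    fun M hM => ⟨hA, (hSstable M hM).transpose⟩
  obtain ⟨K₂, -, h₂⟩ := hS.exists_sylvesterBounded continuous_const continuous_id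
    fun M hM => ⟨hA.transpose, hSstable M hM⟩
  obtain ⟨K₃, -, h₃⟩ := hS.exists_sylvesterBounded continuous_id hT
    fun M hM => ⟨hSstable M hM, (hSstable M hM).transpose⟩
  obtain ⟨K₄, -, h₄⟩ := hS.exists_sylvesterBounded hT continuous_id
    fun M hM => ⟨(hSstable M hM).transpose, hSstable M hM⟩
  refine ⟨max (max K₁ K₂) (max K₃ K₄), le_max_of_le_left (le_max_of_le_left hK₁),
    fun M hM => ⟨(h₁ M hM).mono ?_, (h₂ M hM).mono ?_, (h₃ M hM).mono ?_, (h₄ M hM).mono ?_⟩⟩ <;>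
  simp

theorem norm_hessian_le {n r : ℕ} {K : ℝ} {A : Matrix (Fin n) (Fin n) ℝ}
    {A_r ξ P Q P' Q' : Matrix (Fin r) (Fin r) ℝ} {X Y X' Y' : Matrix (Fin n) (Fin r) ℝ} (hK : 0 ≤ K)
    (hAX : SylvesterBounded K A A_rᵀ) (hAY : SylvesterBounded K Aᵀ A_r)
    (hAP : SylvesterBounded K A_r A_rᵀ) (hAQ : SylvesterBounded K A_rᵀ A_r)
    (hX' : A * X' + X' * A_rᵀ + X * ξᵀ = 0) (hY' : Aᵀ * Y' + Y' * A_r + Y * ξ = 0)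
    (hP' : A_r * P' + P' * A_rᵀ + ξ * P + P * ξᵀ = 0)
    (hQ' : A_rᵀ * Q' + Q' * A_r + ξᵀ * Q + Q * ξ = 0) :
    ‖Q' * P + Q * P' + Y'ᵀ * X + Yᵀ * X'‖ ≤ 2 * K * (‖X‖ * ‖Y‖ + 2 * (‖P‖ * ‖Q‖)) * ‖ξ‖ := by
  have hX'b : ‖X'‖ ≤ K * (‖X‖ * ‖ξ‖) := hAX.norm_le hK hX' (frobenius_norm_mul_transpose_le _ _)
  have hY'b : ‖Y'‖ ≤ K * (‖Y‖ * ‖ξ‖) := hAY.norm_le hK hY' (frobenius_norm_mul _ _)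
  have hP'b : ‖P'‖ ≤ K * (2 * (‖P‖ * ‖ξ‖)) := by
    refine hAP.norm_le hK (V := ξ * P + P * ξᵀ) (by rw [← add_assoc, hP']) ?_
    linarith [norm_add_le (ξ * P) (P * ξᵀ), frobenius_norm_mul ξ P,
      frobenius_norm_mul_transpose_le P ξ]
  have hQ'b : ‖Q'‖ ≤ K * (2 * (‖Q‖ * ‖ξ‖)) := by
    refine hAQ.norm_le hK (V := ξᵀ * Q + Q * ξ) (by rw [← add_assoc, hQ']) ?_
    linarith [norm_add_le (ξᵀ * Q) (Q * ξ), frobenius_norm_transpose_mul_le ξ Q,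
      frobenius_norm_mul Q ξ]
  calc ‖Q' * P + Q * P' + Y'ᵀ * X + Yᵀ * X'‖
      ≤ ‖Q'‖ * ‖P‖ + ‖Q‖ * ‖P'‖ + ‖Y'‖ * ‖X‖ + ‖Y‖ * ‖X'‖ := by
        refine (norm_add₄_le ..).trans ?_
        gcongr
        exacts [frobenius_norm_mul _ _, frobenius_norm_mul _ _,
          frobenius_norm_transpose_mul_le _ _, frobenius_norm_transpose_mul_le _ _]
    _ ≤ K * (2 * (‖Q‖ * ‖ξ‖)) * ‖P‖ + ‖Q‖ * (K * (2 * (‖P‖ * ‖ξ‖))) +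
        K * (‖Y‖ * ‖ξ‖) * ‖X‖ + ‖Y‖ * (K * (‖X‖ * ‖ξ‖)) := by gcongr
    _ = 2 * K * (‖X‖ * ‖Y‖ + 2 * (‖P‖ * ‖Q‖)) * ‖ξ‖ := by ring

theorem hessA_bound_general {n m p r : ℕ}
    (A : Matrix (Fin n) (Fin n) ℝ) (hA : IsStable A)
    (B : Matrix (Fin n) (Fin m) ℝ) (C : Matrix (Fin p) (Fin n) ℝ)
    (S : Set (Matrix (Fin r) (Fin r) ℝ))
    (hScpt : IsCompact S) (hSstable : ∀ M ∈ S, IsStable M) :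
    ∃ c₁ > (0 : ℝ), ∃ c₂ > (0 : ℝ),
      ∀ A_r ∈ S,
      ∀ (B_r : Matrix (Fin r) (Fin m) ℝ) (C_r : Matrix (Fin p) (Fin r) ℝ)
        (ξ : Matrix (Fin r) (Fin r) ℝ)
        (X Y X' Y' : Matrix (Fin n) (Fin r) ℝ)
        (P Q P' Q' : Matrix (Fin r) (Fin r) ℝ),
        A * X + X * A_rᵀ + B * B_rᵀ = 0 →
        Aᵀ * Y + Y * A_r - Cᵀ * C_r = 0 →
        A_r * P + P * A_rᵀ + B_r * B_rᵀ = 0 →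
        A_rᵀ * Q + Q * A_r + C_rᵀ * C_r = 0 →
        A * X' + X' * A_rᵀ + X * ξᵀ = 0 →
        Aᵀ * Y' + Y' * A_r + Y * ξ = 0 →
        A_r * P' + P' * A_rᵀ + ξ * P + P * ξᵀ = 0 →
        A_rᵀ * Q' + Q' * A_r + ξᵀ * Q + Q * ξ = 0 →
        frobNorm (Q' * P + Q * P' + Y'ᵀ * X + Yᵀ * X') ≤
          (c₁ + c₂ * frobNorm B_r * frobNorm C_r) *
            frobNorm B_r * frobNorm C_r * frobNorm ξ := by
  obtain ⟨K, hK, hbound⟩ := hScpt.exists_sylvesterBounded_lyapunov hA hSstable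
  refine ⟨2 * K ^ 3 * ‖B‖ * ‖C‖ + 1, by positivity, 4 * K ^ 3 + 1, by positivity, ?_⟩
  intro A_r hA_r B_r C_r ξ X Y X' Y' P Q P' Q' hX hY hP hQ hX' hY' hP' hQ'
  obtain ⟨hAX, hAY, hAP, hAQ⟩ := hbound A_r hA_r
  simp only [frobNorm_eq_norm]
  have hXb : ‖X‖ ≤ K * (‖B‖ * ‖B_r‖) := hAX.norm_le hK hX (frobenius_norm_mul_transpose_le _ _)
  have hYb : ‖Y‖ ≤ K * (‖C‖ * ‖C_r‖) := hAY.norm_le hK (by rwa [← sub_eq_add_neg])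
    ((norm_neg _).trans_le (frobenius_norm_transpose_mul_le _ _))
  have hPb : ‖P‖ ≤ K * (‖B_r‖ * ‖B_r‖) := hAP.norm_le hK hP (frobenius_norm_mul_transpose_le _ _)
  have hQb : ‖Q‖ ≤ K * (‖C_r‖ * ‖C_r‖) := hAQ.norm_le hK hQ (frobenius_norm_transpose_mul_le _ _)
  calc _ ≤ 2 * K * (‖X‖ * ‖Y‖ + 2 * (‖P‖ * ‖Q‖)) * ‖ξ‖ :=
        norm_hessian_le hK hAX hAY hAP hAQ hX' hY' hP' hQ'
    _ ≤ 2 * K * (K * (‖B‖ * ‖B_r‖) * (K * (‖C‖ * ‖C_r‖)) +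
          2 * (K * (‖B_r‖ * ‖B_r‖) * (K * (‖C_r‖ * ‖C_r‖)))) * ‖ξ‖ := by gcongr
    _ = (2 * K ^ 3 * ‖B‖ * ‖C‖ + 4 * K ^ 3 * ‖B_r‖ * ‖C_r‖) * ‖B_r‖ * ‖C_r‖ * ‖ξ‖ := by ring
    _ ≤ _ := by gcongr <;> linarith

/-- bound on the Hessian `Q' P + Q P' + Y'ᵀ X + Yᵀ X'` of the H²
objective with respect to `A_r` in the direction `ξ`, uniformly over a compact
set `S` of stable matrices. -/
theorem hessA_bound {n m p r : ℕ}
    (A : Matrix (Fin n) (Fin n) ℝ) (hA : IsStable A)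
    (B : Matrix (Fin n) (Fin m) ℝ) (C : Matrix (Fin p) (Fin n) ℝ)
    (S : Set (Matrix (Fin r) (Fin r) ℝ)) (hSne : S.Nonempty)
    (hScpt : IsCompact S) (hSstable : ∀ M ∈ S, IsStable M) :
    ∃ c₁ > (0 : ℝ), ∃ c₂ > (0 : ℝ),
      ∀ A_r ∈ S,
      ∀ (B_r : Matrix (Fin r) (Fin m) ℝ) (C_r : Matrix (Fin p) (Fin r) ℝ)
        (ξ : Matrix (Fin r) (Fin r) ℝ)
        (X Y X' Y' : Matrix (Fin n) (Fin r) ℝ)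
        (P Q P' Q' : Matrix (Fin r) (Fin r) ℝ),
        A * X + X * A_rᵀ + B * B_rᵀ = 0 →
        Aᵀ * Y + Y * A_r - Cᵀ * C_r = 0 →
        A_r * P + P * A_rᵀ + B_r * B_rᵀ = 0 →
        A_rᵀ * Q + Q * A_r + C_rᵀ * C_r = 0 →
        A * X' + X' * A_rᵀ + X * ξᵀ = 0 →
        Aᵀ * Y' + Y' * A_r + Y * ξ = 0 →
        A_r * P' + P' * A_rᵀ + ξ * P + P * ξᵀ = 0 →
        A_rᵀ * Q' + Q' * A_r + ξᵀ * Q + Q * ξ = 0 →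
        frobNorm (Q' * P + Q * P' + Y'ᵀ * X + Yᵀ * X') ≤
          (c₁ + c₂ * frobNorm B_r * frobNorm C_r) *
            frobNorm B_r * frobNorm C_r * frobNorm ξ :=
  hessA_bound_general A hA B C S hScpt hSstable
end

section
/- Let A ∈ ℝ^{n×n} be stable, let N ∈ ℝ^{n×r}, let U ⊆ ℝ^{r×r} be an open set every element of which is stable, and let Φ : U → ℝ^{n×r} be a function satisfying A Φ(M) + Φ(M) Mᵀ + N = 0 for every M ∈ U. Then for every A_r ∈ U, Φ is Fréchet differentiable at A_r, and for every direction ξ ∈ ℝ^{r×r} the derivative DΦ(A_r)[ξ] is the unique matrix X' ∈ ℝ^{n×r} satisfying A X' + X' A_rᵀ + Φ(A_r) ξᵀ = 0. -/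
/-!
For stable `A` and `M` the spectra of `A` and `-Mᵀ` lie in opposite open half-planes, so
`χ_{-Mᵀ}(A)` is invertible; since `χ_{-Mᵀ}(A) X = X χ_{-Mᵀ}(-Mᵀ) = 0` whenever `A X + X Mᵀ = 0`,
the Sylvester operator `S(M) X = A X + X Mᵀ` is injective, hence invertible. Near `A_r` the
solution is therefore `Φ(M) = S(M)⁻¹(-N)`, where `S` is affine in `M`, and differentiating
the inverse gives `DΦ(A_r) ξ = -S(A_r)⁻¹ (Φ(A_r) ξᵀ)`.
-/

open Matrix

attribute [local instance] Matrix.normedAddCommGroup Matrix.normedSpace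

open Polynomial Filter Topology

section

variable {𝕜 E F : Type*} [NontriviallyNormedField 𝕜] [NormedAddCommGroup E] [NormedSpace 𝕜 E]
  [NormedAddCommGroup F] [NormedSpace 𝕜 F] {x₀ : E} {φ : E → F} {b : F}

theorem exists_hasFDerivAt_of_eventually_apply_eq [CompleteSpace F] {T : E → F →L[𝕜] F}
    {T' : E →L[𝕜] F →L[𝕜] F} (hT : HasFDerivAt T T' x₀) (hT₀ : IsUnit (T x₀))
    (hφ : ∀ᶠ x in 𝓝 x₀, T x (φ x) = b) :
    ∃ D : E →L[𝕜] F, HasFDerivAt φ D x₀ ∧ ∀ ξ, T x₀ (D ξ) + T' ξ (φ x₀) = 0 := by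
  obtain ⟨u, hu⟩ := hT₀
  have hφ_inv : ∀ᶠ x in 𝓝 x₀, φ x = Ring.inverse (T x) b := by
    filter_upwards [hφ, hT.continuousAt.preimage_mem_nhds (hu ▸ Units.nhds u)] with x hx hunit
    rw [← hx, ← mul_apply_eq_comp, Ring.inverse_mul_cancel _ hunit, one_apply_eq_self]
  have hφ₀ : φ x₀ = (↑u⁻¹ : F →L[𝕜] F) b := by rw [hφ_inv.self_of_nhds, ← hu, Ring.inverse_unit]
  have hD := ((ContinuousLinearMap.apply 𝕜 F b).hasFDerivAt.comp x₀
    ((hu ▸ hasFDerivAt_ringInverse (𝕜 := 𝕜) u).comp x₀ hT)).congr_of_eventuallyEq hφ_inv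
  refine ⟨_, hD, fun ξ => ?_⟩
  rw [← hu, hφ₀]
  simp only [ContinuousLinearMap.comp_apply, FunLike.coe_neg, Pi.neg_apply,
    ContinuousLinearMap.mulLeftRight_apply, ContinuousLinearMap.apply_apply, map_neg]
  rw [← mul_apply_eq_comp (↑u : F →L[𝕜] F), ← mul_assoc, ← mul_assoc, Units.mul_inv, one_mul,
    mul_apply_eq_comp, neg_add_cancel]

theorem exists_hasFDerivAt_of_eventually_add_apply_eq [CompleteSpace 𝕜] [FiniteDimensional 𝕜 E]
    [FiniteDimensional 𝕜 F] {L : F →ₗ[𝕜] F} {B : E →ₗ[𝕜] F →ₗ[𝕜] F}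
    (hinj : Function.Injective (L + B x₀)) (hφ : ∀ᶠ x in 𝓝 x₀, L (φ x) + B x (φ x) = b) :
    ∃ D : E →L[𝕜] F, HasFDerivAt φ D x₀ ∧ ∀ ξ, L (D ξ) + B x₀ (D ξ) + B ξ (φ x₀) = 0 := by
  have := FiniteDimensional.complete 𝕜 F
  let B' : E →L[𝕜] F →L[𝕜] F :=
    LinearMap.toContinuousLinearMap (LinearMap.toContinuousLinearMap.toLinearMap ∘ₗ B)
  have hT : HasFDerivAt (fun x => LinearMap.toContinuousLinearMap L + B' x) B' x₀ :=
    B'.hasFDerivAt.const_add _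
  have hT₀ : IsUnit (LinearMap.toContinuousLinearMap L + B' x₀) :=
    ContinuousLinearMap.isUnit_iff_bijective.mpr
      ⟨hinj, LinearMap.injective_iff_surjective.mp hinj⟩
  simpa [B', add_assoc] using
    exists_hasFDerivAt_of_eventually_apply_eq hT hT₀ (by simpa [B'] using hφ)

end

namespace Matrix

variable {m n : Type*} [Fintype m] [DecidableEq m] [Fintype n] [DecidableEq n]

theorem aeval_mul_eq_mul_aeval {R : Type*} [CommRing R] {A : Matrix m m R} {B : Matrix n n R}
    {X : Matrix m n R} (h : A * X = X * B) (p : R[X]) :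
    aeval A p * X = X * aeval B p := by
  induction p using Polynomial.induction_on' with
  | add p q hp hq => simp only [map_add, Matrix.add_mul, Matrix.mul_add, hp, hq]
  | monomial k c =>
    have hpow : A ^ k * X = X * B ^ k := by
      induction k with
      | zero => simp
      | succ k ih => rw [pow_succ, pow_succ, Matrix.mul_assoc, h, ← Matrix.mul_assoc, ih,
          Matrix.mul_assoc]
    simp only [aeval_monomial, Algebra.algebraMap_eq_smul_one, smul_mul_assoc, one_mul,
      Matrix.smul_mul, Matrix.mul_smul, hpow]

theorem spectrum_transpose_s10 {K : Type*} [Field K] (B : Matrix n n K) :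
    spectrum K Bᵀ = spectrum K B := by
  ext μ
  simp only [mem_spectrum_iff_isRoot_charpoly, charpoly_transpose]

theorem eq_zero_of_mul_eq_mul_of_disjoint_spectrum_s10 {K : Type*} [Field K] [IsAlgClosed K]
    {A : Matrix m m K} {B : Matrix n n K} {X : Matrix m n K}
    (hAB : Disjoint (spectrum K A) (spectrum K B)) (h : A * X = X * B) : X = 0 := by
  cases isEmpty_or_nonempty n
  · exact Subsingleton.elim _ _
  have hdeg : 0 < B.charpoly.degree := by
    rw [charpoly_degree_eq_dim]
    exact_mod_cast Fintype.card_pos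
  have hunit : IsUnit (aeval A B.charpoly) := by
    by_contra hnu
    rw [← spectrum.zero_mem_iff K, spectrum.map_polynomial_aeval_of_degree_pos A _ hdeg] at hnu
    obtain ⟨μ, hμA, hμB⟩ := hnu
    exact hAB.ne_of_mem hμA (mem_spectrum_of_isRoot_charpoly hμB) rfl
  have hzero := aeval_mul_eq_mul_aeval h B.charpoly
  rw [aeval_self_charpoly, Matrix.mul_zero] at hzero
  obtain ⟨u, hu⟩ := hunit
  refine mul_right_injective_of_inv _ _ u.inv_mul ?_
  simpa [hu] using hzero

end Matrix

theorem IsStable.disjoint_spectrum_neg_transpose {n r : ℕ} {A : Matrix (Fin n) (Fin n) ℝ}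
    {M : Matrix (Fin r) (Fin r) ℝ} (hA : IsStable A) (hM : IsStable M) :
    Disjoint (spectrum ℂ (A.map Complex.ofReal)) (spectrum ℂ (-(M.map Complex.ofReal)ᵀ)) := by
  rw [← spectrum.neg_eq, spectrum_transpose_s10, Set.disjoint_left]
  intro μ hμA hμM
  have hA' := hA μ hμA
  have hM' := hM (-μ) hμM
  rw [Complex.neg_re] at hM'
  linarith

theorem IsStable.eq_zero_of_mul_add_mul_transpose_eq_zero {n r : ℕ}
    {A : Matrix (Fin n) (Fin n) ℝ} {M : Matrix (Fin r) (Fin r) ℝ} (hA : IsStable A)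
    (hM : IsStable M) {X : Matrix (Fin n) (Fin r) ℝ} (h : A * X + X * Mᵀ = 0) : X = 0 := by
  have h' : A * X = X * -Mᵀ := by
    rw [Matrix.mul_neg]
    exact eq_neg_of_add_eq_zero_left h
  apply Matrix.map_injective Complex.ofReal_injective
  dsimp only
  rw [Matrix.map_zero _ Complex.ofReal_zero]
  refine eq_zero_of_mul_eq_mul_of_disjoint_spectrum_s10 (hA.disjoint_spectrum_neg_transpose hM) ?_
  have hc := congrArg (·.map Complex.ofRealHom) h'
  simp only [Matrix.map_mul] at hc
  rwa [Matrix.map_neg _ (map_neg _), Matrix.transpose_map] at hc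

/-- the solution map of the Sylvester equation
`A Φ(M) + Φ(M) Mᵀ + N = 0` on an open set `U` of stable matrices is Fréchet
differentiable at every `A_r ∈ U`, and its derivative in the direction `ξ` is
the unique solution `X'` of `A X' + X' A_rᵀ + Φ(A_r) ξᵀ = 0`. -/
theorem sylvester_solution_differentiable {n r : ℕ}
    (A : Matrix (Fin n) (Fin n) ℝ) (hA : IsStable A)
    (N : Matrix (Fin n) (Fin r) ℝ)
    (U : Set (Matrix (Fin r) (Fin r) ℝ)) (hU : IsOpen U)
    (hUstable : ∀ M ∈ U, IsStable M)
    (Φ : Matrix (Fin r) (Fin r) ℝ → Matrix (Fin n) (Fin r) ℝ)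
    (hΦ : ∀ M ∈ U, A * Φ M + Φ M * Mᵀ + N = 0) :
    ∀ A_r ∈ U,
      ∃ D : Matrix (Fin r) (Fin r) ℝ →L[ℝ] Matrix (Fin n) (Fin r) ℝ,
        HasFDerivAt Φ D A_r ∧
        ∀ ξ : Matrix (Fin r) (Fin r) ℝ,
          (A * D ξ + D ξ * A_rᵀ + Φ A_r * ξᵀ = 0) ∧
          ∀ X' : Matrix (Fin n) (Fin r) ℝ,
            A * X' + X' * A_rᵀ + Φ A_r * ξᵀ = 0 → X' = D ξ := by
  intro A_r hAr
  let L := mulLeftLinearMap (Fin r) ℝ A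
  let B : Matrix (Fin r) (Fin r) ℝ →ₗ[ℝ] Matrix (Fin n) (Fin r) ℝ →ₗ[ℝ] Matrix (Fin n) (Fin r) ℝ :=
    (mulLinearMap ℝ).flip ∘ₗ (transposeLinearEquiv (Fin r) (Fin r) ℝ ℝ).toLinearMap
  have hinj : Function.Injective (L + B A_r) := (injective_iff_map_eq_zero _).mpr fun X hX =>
    hA.eq_zero_of_mul_add_mul_transpose_eq_zero (hUstable A_r hAr) hX
  have hΦ' : ∀ᶠ M in 𝓝 A_r, L (Φ M) + B M (Φ M) = -N :=
    eventually_of_mem (hU.mem_nhds hAr) fun M hM => eq_neg_of_add_eq_zero_left (hΦ M hM)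
  obtain ⟨D, hD, hDξ⟩ := exists_hasFDerivAt_of_eventually_add_apply_eq hinj hΦ'
  replace hDξ : ∀ ξ, A * D ξ + D ξ * A_rᵀ + Φ A_r * ξᵀ = 0 := hDξ
  refine ⟨D, hD, fun ξ => ⟨hDξ ξ, fun X' hX' => hinj ?_⟩⟩
  change A * X' + X' * A_rᵀ = A * D ξ + D ξ * A_rᵀ
  rw [eq_neg_of_add_eq_zero_left hX', eq_neg_of_add_eq_zero_left (hDξ ξ)]
end
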